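/- Let μ be a positive finite measure on an interval I ⊆ ℝ, and let f, g : I → ℝ be non-decreasing functions such that f, g, and f·g are integrable with respect to μ. If μ(I) · ∫_I f(x)g(x) dμ(x) = (∫_I f dμ) · (∫_I g dμ), then f is constant μ-almost everywhere on I or g is constant μ-almost everywhere on I. -/

import Mathlib

/-!
Chebyshev's identity
`∫∫ (f x - f y) (g x - g y) dμ(x) dμ(y) = 2 (μ(I) ∫ f g dμ - ∫ f dμ ∫ g dμ)`
has an integrand that is nonnegative on `I × I` because `f` and `g` are both monotone, so
equality forces `f x = f y` or `g x = g y` for almost every pair `(x, y)`.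
If neither `f` nor `g` were a.e. constant, there would be sets `S = f⁻¹ U` and `T = g⁻¹ V`
such that none of `S`, `Sᶜ`, `T`, `Tᶜ` is null. But `f` and `g` both separate the points
of the rectangles `(S ∩ T) × (Sᶜ ∩ Tᶜ)` and `(S ∩ Tᶜ) × (Sᶜ ∩ T)`, so each of them has a
null side, and in each of the four cases one of `S`, `Sᶜ`, `T`, `Tᶜ` is null.
-/

open MeasureTheory Set

section

variable {α : Type*} [MeasurableSpace α] {ν : Measure α}

lemma exists_measure_preimage_ne_zero_and_compl_ne_zero {β : Type*} [Nonempty β]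
    [MeasurableSpace β] [MeasurableSpace.CountablySeparated β] {f : α → β}
    (h : ¬∃ c, ∀ᵐ x ∂ν, f x = c) : ∃ U, ν (f ⁻¹' U) ≠ 0 ∧ ν (f ⁻¹' U)ᶜ ≠ 0 := by
  contrapose! h
  refine Filter.exists_eventuallyEq_const_of_forall_separating MeasurableSet fun U _ => ?_
  by_cases hU : ν (f ⁻¹' U) = 0
  · exact Or.inr (measure_eq_zero_iff_ae_notMem.mp hU)
  · exact Or.inl (ae_iff.mpr (h U hU))

lemma measure_eq_zero_of_inter_of_inter_compl (s t : Set α) (h : ν (s ∩ t) = 0)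
    (h' : ν (s ∩ tᶜ) = 0) : ν s = 0 :=
  inter_union_compl s t ▸ measure_union_null h h'

theorem exists_ae_eq_const_or_of_ae_prod [SFinite ν] {β γ : Type*} [Nonempty β] [Nonempty γ]
    [MeasurableSpace β] [MeasurableSpace.CountablySeparated β]
    [MeasurableSpace γ] [MeasurableSpace.CountablySeparated γ] {f : α → β} {g : α → γ}
    (h : ∀ᵐ p ∂ν.prod ν, f p.1 = f p.2 ∨ g p.1 = g p.2) :
    (∃ c, ∀ᵐ x ∂ν, f x = c) ∨ (∃ c, ∀ᵐ x ∂ν, g x = c) := by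
  by_contra hfg
  obtain ⟨hf, hg⟩ := not_or.mp hfg
  obtain ⟨U, hS, hSc⟩ := exists_measure_preimage_ne_zero_and_compl_ne_zero hf
  obtain ⟨V, hT, hTc⟩ := exists_measure_preimage_ne_zero_and_compl_ne_zero hg
  set S := f ⁻¹' U
  set T := g ⁻¹' V
  have hrect : ∀ {A B : Set α}, (∀ x ∈ A, ∀ y ∈ B, f x ≠ f y ∧ g x ≠ g y) →
      ν A = 0 ∨ ν B = 0 := by
    intro A B hAB
    rw [← mul_eq_zero, ← Measure.prod_prod]
    refine measure_mono_null (fun p hp => ?_) (ae_iff.mp h)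
    simpa using hAB p.1 hp.1 p.2 hp.2
  have h₁ : ν (S ∩ T) = 0 ∨ ν (Sᶜ ∩ Tᶜ) = 0 := hrect fun x hx y hy => by
    simp only [S, T, mem_inter_iff, mem_compl_iff, mem_preimage] at hx hy
    exact ⟨ne_of_mem_of_not_mem hx.1 hy.1, ne_of_mem_of_not_mem hx.2 hy.2⟩
  have h₂ : ν (S ∩ Tᶜ) = 0 ∨ ν (Sᶜ ∩ T) = 0 := hrect fun x hx y hy => by
    simp only [S, T, mem_inter_iff, mem_compl_iff, mem_preimage] at hx hy
    exact ⟨ne_of_mem_of_not_mem hx.1 hy.1, (ne_of_mem_of_not_mem hy.2 hx.2).symm⟩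
  rcases h₁ with h₁ | h₁ <;> rcases h₂ with h₂ | h₂
  · exact hS (measure_eq_zero_of_inter_of_inter_compl S T h₁ h₂)
  · rw [inter_comm] at h₁ h₂
    exact hT (measure_eq_zero_of_inter_of_inter_compl T S h₁ h₂)
  · rw [inter_comm] at h₁ h₂
    exact hTc (measure_eq_zero_of_inter_of_inter_compl Tᶜ S h₂ h₁)
  · exact hSc (measure_eq_zero_of_inter_of_inter_compl Sᶜ T h₂ h₁)

variable [IsFiniteMeasure ν] {f g : α → ℝ}

lemma integrable_prod_sub_mul_sub (hf : Integrable f ν) (hg : Integrable g ν)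
    (hfg : Integrable (fun x => f x * g x) ν) :
    Integrable (fun p : α × α => (f p.1 - f p.2) * (g p.1 - g p.2)) (ν.prod ν) := by
  have := ((hfg.comp_fst ν).add (hfg.comp_snd ν)).sub ((hf.mul_prod hg).add (hg.mul_prod hf))
  exact this.congr (.of_forall fun p => by simp only [Pi.add_apply, Pi.sub_apply]; ring)

theorem integral_prod_sub_mul_sub (hf : Integrable f ν) (hg : Integrable g ν)
    (hfg : Integrable (fun x => f x * g x) ν) :
    ∫ p, (f p.1 - f p.2) * (g p.1 - g p.2) ∂ν.prod ν =
      2 * (ν.real univ * ∫ x, f x * g x ∂ν - (∫ x, f x ∂ν) * ∫ x, g x ∂ν) := by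
  have hdiag : Integrable (fun p : α × α => f p.1 * g p.1 + f p.2 * g p.2) (ν.prod ν) :=
    (hfg.comp_fst ν).add (hfg.comp_snd ν)
  have hcross : Integrable (fun p : α × α => f p.1 * g p.2 + g p.1 * f p.2) (ν.prod ν) :=
    (hf.mul_prod hg).add (hg.mul_prod hf)
  calc ∫ p, (f p.1 - f p.2) * (g p.1 - g p.2) ∂ν.prod ν
      = ∫ p, (f p.1 * g p.1 + f p.2 * g p.2) - (f p.1 * g p.2 + g p.1 * f p.2) ∂ν.prod ν := by
        congr with p; ring
    _ = 2 * (ν.real univ * ∫ x, f x * g x ∂ν - (∫ x, f x ∂ν) * ∫ x, g x ∂ν) := by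
      rw [integral_sub hdiag hcross, integral_add (hfg.comp_fst ν) (hfg.comp_snd ν),
        integral_add (hf.mul_prod hg) (hg.mul_prod hf), integral_fun_fst (fun x => f x * g x),
        integral_fun_snd (fun x => f x * g x), integral_prod_mul, integral_prod_mul]
      ring

theorem MonovaryOn.ae_prod_eq_or_eq_of_integral_mul_eq {s : Set α} (hfg : MonovaryOn f g s)
    (hs : ∀ᵐ x ∂ν, x ∈ s) (hfi : Integrable f ν) (hgi : Integrable g ν)
    (hfgi : Integrable (fun x => f x * g x) ν)
    (heq : ν.real univ * ∫ x, f x * g x ∂ν = (∫ x, f x ∂ν) * ∫ x, g x ∂ν) :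
    ∀ᵐ p ∂ν.prod ν, f p.1 = f p.2 ∨ g p.1 = g p.2 := by
  have hnonneg : 0 ≤ᵐ[ν.prod ν] fun p => (f p.1 - f p.2) * (g p.1 - g p.2) := by
    filter_upwards [Measure.quasiMeasurePreserving_fst.ae hs,
      Measure.quasiMeasurePreserving_snd.ae hs] with p hp₁ hp₂
    exact hfg.sub_mul_sub_nonneg hp₂ hp₁
  have hintegral : ∫ p, (f p.1 - f p.2) * (g p.1 - g p.2) ∂ν.prod ν = 0 := by
    rw [integral_prod_sub_mul_sub hfi hgi hfgi, heq, sub_self, mul_zero]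
  have hzero := (integral_eq_zero_iff_of_nonneg_ae hnonneg
    (integrable_prod_sub_mul_sub hfi hgi hfgi)).mp hintegral
  filter_upwards [hzero] with p hp
  simpa [sub_eq_zero] using hp

end

/-- **Equality case in Chebyshev's integral inequality.** If `μ` is a finite (nonnegative)
measure on an interval `I ⊆ ℝ` and `f`, `g` are non-decreasing on `I` with `f`, `g`, `f·g`
integrable with respect to `μ` on `I`, and if
`μ(I) · ∫_I f g dμ = (∫_I f dμ) · (∫_I g dμ)`, then `f` or `g` is constant `μ`-almost
everywhere on `I`. -/
theorem chebyshev_integral_equality_case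
    (I : Set ℝ) (hI : I.OrdConnected)
    (μ : Measure ℝ) [IsFiniteMeasure μ]
    (f g : ℝ → ℝ)
    (hf : MonotoneOn f I) (hg : MonotoneOn g I)
    (hfi : IntegrableOn f I μ) (hgi : IntegrableOn g I μ)
    (hfgi : IntegrableOn (fun x => f x * g x) I μ)
    (heq : (μ I).toReal * ∫ x in I, f x * g x ∂μ =
      (∫ x in I, f x ∂μ) * ∫ x in I, g x ∂μ) :
    (∃ c : ℝ, ∀ᵐ x ∂μ.restrict I, f x = c) ∨
      (∃ c : ℝ, ∀ᵐ x ∂μ.restrict I, g x = c) := by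
  have hIae : ∀ᵐ x ∂μ.restrict I, x ∈ I := ae_restrict_mem hI.measurableSet
  refine exists_ae_eq_const_or_of_ae_prod ?_
  refine (hf.monovaryOn hg).ae_prod_eq_or_eq_of_integral_mul_eq hIae hfi hgi hfgi ?_
  rwa [measureReal_restrict_apply_univ]
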